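/- Let X be a Polish space and c a positive continuous cost function on X. For probability measures μ, ν on X with supp μ ⊆ supp ν and T_c(μ, ν) < ∞, the equality T_c(μ, ν) = ∫∫ c(x₁,x₂) dμ(x₁) dν(x₂) holds (i.e., the independent coupling μ ⊗ ν is optimal) if and only if μ = δ_x is a Dirac measure at some point x ∈ X. -/

import Mathlib

open MeasureTheory ENNReal Filter Topology

/-- The optimal transport cost between two measures `μ` and `ν` on a space `Z`
with base cost `c`. -/
noncomputable def otCost {Z : Type*} [MeasurableSpace Z]
    (c : Z → Z → ℝ≥0∞) (μ ν : Measure Z) : ℝ≥0∞ :=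
  ⨅ (π : Measure (Z × Z)) (_ : π.map Prod.fst = μ ∧ π.map Prod.snd = ν),
    ∫⁻ p, c p.1 p.2 ∂π

/-- The (topological) support of a measure: the set of points all of whose open
neighborhoods have positive measure (the smallest closed set of full measure). -/
def msupport {Z : Type*} [TopologicalSpace Z] [MeasurableSpace Z]
    (μ : Measure Z) : Set Z :=
  {z | ∀ U : Set Z, IsOpen U → z ∈ U → 0 < μ U}

/-!
If `μ` is not a Dirac mass, its support contains two points `x₁ ≠ x₂`, which also lie in the
support of `ν`. By continuity of `c` there are open neighbourhoods `Uᵢ ∋ xᵢ` such that `c < r₁`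
on `U₁ × U₁` and `U₂ × U₂` while `c > r₂ > r₁` on `U₁ × U₂` and `U₂ × U₁`. The measures
`μ[|U₁] ⊗ ν[|U₂] + μ[|U₂] ⊗ ν[|U₁]` and `μ[|U₁] ⊗ ν[|U₁] + μ[|U₂] ⊗ ν[|U₂]` have the same
marginals, and a small multiple of the first lies below `μ ⊗ ν`; trading it for the same
multiple of the second yields a coupling of strictly smaller (finite) cost, so `μ ⊗ ν` is not
optimal. Conversely every coupling of `δ_x` and `ν` has cost `∫ c(x, ·) dν`.
-/

open ProbabilityTheory

section Support

variable {X : Type*} [TopologicalSpace X] [MeasurableSpace X]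

lemma msupport_eq_support (μ : Measure X) : msupport μ = μ.support := by
  ext x
  simp only [msupport, Measure.support_eq_forall_isOpen, Set.mem_ofPred_eq]
  exact forall_congr' fun U => Imp.swap

lemma exists_eq_dirac_of_subsingleton_support [HereditarilyLindelofSpace X]
    [MeasurableSingletonClass X] (μ : Measure X) [IsProbabilityMeasure μ]
    (h : μ.support.Subsingleton) : ∃ x, μ = Measure.dirac x := by
  obtain ⟨x, hx⟩ := Measure.nonempty_support (IsProbabilityMeasure.ne_zero μ)
  have hae : ∀ᵐ y ∂μ, y ∈ ({x} : Set X) :=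
    mem_of_superset Measure.support_mem_ae fun y hy => h hy hx
  have hx₁ : μ {x} = 1 := by
    rw [(ae_mem_iff_measure_eq (measurableSet_singleton x).nullMeasurableSet).1 hae,
      measure_univ]
  refine ⟨x, ?_⟩
  rw [← Measure.restrict_eq_self_of_ae_mem hae, Measure.restrict_singleton, hx₁, one_smul]

end Support

section Exchange

variable {X : Type*} [MeasurableSpace X] {c : X → X → ℝ≥0∞} {μ ν : Measure X}

lemma otCost_le_lintegral {π : Measure (X × X)} (h₁ : π.map Prod.fst = μ)
    (h₂ : π.map Prod.snd = ν) : otCost c μ ν ≤ ∫⁻ p, c p.1 p.2 ∂π :=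
  iInf₂_le π ⟨h₁, h₂⟩

lemma otCost_lt_of_le_of_map_eq {P B G : Measure (X × X)} [IsFiniteMeasure P]
    (hP₁ : P.map Prod.fst = μ) (hP₂ : P.map Prod.snd = ν) (hBP : B ≤ P)
    (hG₁ : G.map Prod.fst = B.map Prod.fst) (hG₂ : G.map Prod.snd = B.map Prod.snd)
    (hGB : ∫⁻ p, c p.1 p.2 ∂G < ∫⁻ p, c p.1 p.2 ∂B) (hP : ∫⁻ p, c p.1 p.2 ∂P ≠ ∞) :
    otCost c μ ν < ∫⁻ p, c p.1 p.2 ∂P := by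
  have : IsFiniteMeasure B := isFiniteMeasure_of_le P hBP
  have hsplit : P - B + B = P := Measure.sub_add_cancel_of_le hBP
  have hmap {f : X × X → X} (hf : Measurable f) (hGf : G.map f = B.map f) :
      (P - B + G).map f = P.map f := by
    rw [Measure.map_add _ _ hf, hGf, ← Measure.map_add _ _ hf, hsplit]
  have hrest : ∫⁻ p, c p.1 p.2 ∂(P - B) ≠ ∞ :=
    ne_top_of_le_ne_top hP (lintegral_mono' Measure.sub_le le_rfl)
  calc otCost c μ ν ≤ ∫⁻ p, c p.1 p.2 ∂(P - B + G) :=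
        otCost_le_lintegral ((hmap measurable_fst hG₁).trans hP₁)
          ((hmap measurable_snd hG₂).trans hP₂)
    _ < ∫⁻ p, c p.1 p.2 ∂(P - B + B) := by
        simp only [lintegral_add_measure]
        exact ENNReal.add_lt_add_left hrest hGB
    _ = ∫⁻ p, c p.1 p.2 ∂P := by rw [hsplit]

lemma otCost_lt_of_le_smul_of_map_eq {P B G : Measure (X × X)} [IsFiniteMeasure P]
    (hP₁ : P.map Prod.fst = μ) (hP₂ : P.map Prod.snd = ν) {k : ℝ≥0∞} (hk : k ≠ ∞)
    (hBP : B ≤ k • P) (hG₁ : G.map Prod.fst = B.map Prod.fst)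
    (hG₂ : G.map Prod.snd = B.map Prod.snd)
    (hGB : ∫⁻ p, c p.1 p.2 ∂G < ∫⁻ p, c p.1 p.2 ∂B) (hP : ∫⁻ p, c p.1 p.2 ∂P ≠ ∞) :
    otCost c μ ν < ∫⁻ p, c p.1 p.2 ∂P := by
  rcases eq_or_ne k 0 with rfl | hk₀
  · rw [zero_smul, Measure.nonpos_iff_eq_zero'] at hBP
    simp [hBP] at hGB
  refine otCost_lt_of_le_of_map_eq hP₁ hP₂ (B := k⁻¹ • B) (G := k⁻¹ • G) ?_
    (by rw [Measure.map_smul, Measure.map_smul, hG₁])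
    (by rw [Measure.map_smul, Measure.map_smul, hG₂]) ?_ hP
  · calc k⁻¹ • B ≤ k⁻¹ • k • P := by gcongr
      _ = P := by rw [smul_smul, ENNReal.inv_mul_cancel hk₀ hk, one_smul]
  · simp only [lintegral_smul_measure]
    exact (ENNReal.mul_lt_mul_iff_right (ENNReal.inv_ne_zero.2 hk)
      (ENNReal.inv_ne_top.2 hk₀)).2 hGB

end Exchange

section ProdCond

variable {X Y : Type*} [MeasurableSpace X] [MeasurableSpace Y]

lemma ae_mem_prod_cond (μ : Measure X) (ν : Measure Y) [SFinite μ] [SFinite ν] {s : Set X}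
    {t : Set Y} (hs : MeasurableSet s) (ht : MeasurableSet t) :
    ∀ᵐ p ∂(μ[|s]).prod (ν[|t]), p ∈ s ×ˢ t := by
  rw [ProbabilityTheory.cond, ProbabilityTheory.cond, Measure.prod_smul_left,
    Measure.prod_smul_right, Measure.prod_restrict]
  exact Measure.ae_smul_measure (Measure.ae_smul_measure (ae_restrict_mem (hs.prod ht)) _) _

lemma prod_cond_le_smul_prod (μ : Measure X) (ν : Measure Y) [SFinite μ] [SFinite ν]
    (s : Set X) (t : Set Y) : (μ[|s]).prod (ν[|t]) ≤ ((μ s)⁻¹ * (ν t)⁻¹) • μ.prod ν := by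
  rw [ProbabilityTheory.cond, ProbabilityTheory.cond, Measure.prod_smul_left,
    Measure.prod_smul_right, Measure.prod_restrict, smul_smul, mul_comm]
  gcongr
  exact Measure.restrict_le_self

lemma map_fst_add_prod_swap (α₁ α₂ : Measure X) (β₁ β₂ : Measure Y)
    [IsProbabilityMeasure β₁] [IsProbabilityMeasure β₂] :
    (α₁.prod β₂ + α₂.prod β₁).map Prod.fst = (α₁.prod β₁ + α₂.prod β₂).map Prod.fst := by
  simp [Measure.map_add _ _ measurable_fst]

lemma map_snd_add_prod_swap (α₁ α₂ : Measure X) (β₁ β₂ : Measure Y)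
    [IsProbabilityMeasure α₁] [IsProbabilityMeasure α₂] [SFinite β₁] [SFinite β₂] :
    (α₁.prod β₂ + α₂.prod β₁).map Prod.snd = (α₁.prod β₁ + α₂.prod β₂).map Prod.snd := by
  simp [Measure.map_add _ _ measurable_snd, add_comm]

end ProdCond

section ProdCondIntegral

variable {X Y : Type*} [MeasurableSpace X] [MeasurableSpace Y] {μ : Measure X} {ν : Measure Y}
  [IsFiniteMeasure μ] [IsFiniteMeasure ν] {s : Set X} {t : Set Y} {f : X × Y → ℝ≥0∞} {r : ℝ≥0∞}

lemma lintegral_prod_cond_le (hs : MeasurableSet s) (ht : MeasurableSet t) (hμ : μ s ≠ 0)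
    (hν : ν t ≠ 0) (hf : ∀ p ∈ s ×ˢ t, f p ≤ r) : ∫⁻ p, f p ∂(μ[|s]).prod (ν[|t]) ≤ r :=
  have := cond_isProbabilityMeasure hμ
  have := cond_isProbabilityMeasure hν
  lintegral_le_const ((ae_mem_prod_cond μ ν hs ht).mono hf)

lemma le_lintegral_prod_cond (hs : MeasurableSet s) (ht : MeasurableSet t) (hμ : μ s ≠ 0)
    (hν : ν t ≠ 0) (hf : ∀ p ∈ s ×ˢ t, r ≤ f p) : r ≤ ∫⁻ p, f p ∂(μ[|s]).prod (ν[|t]) := by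
  have := cond_isProbabilityMeasure hμ
  have := cond_isProbabilityMeasure hν
  calc r = ∫⁻ _, r ∂(μ[|s]).prod (ν[|t]) := by simp
    _ ≤ ∫⁻ p, f p ∂(μ[|s]).prod (ν[|t]) :=
      lintegral_mono_ae ((ae_mem_prod_cond μ ν hs ht).mono hf)

end ProdCondIntegral

lemma exists_isOpen_prod_subset_of_mem_nhds {X : Type*} [TopologicalSpace X] {x₁ x₂ : X}
    {D F : Set (X × X)} (hD₁ : D ∈ 𝓝 (x₁, x₁)) (hD₂ : D ∈ 𝓝 (x₂, x₂))
    (hF₁₂ : F ∈ 𝓝 (x₁, x₂)) (hF₂₁ : F ∈ 𝓝 (x₂, x₁)) :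
    ∃ U₁ U₂ : Set X, IsOpen U₁ ∧ IsOpen U₂ ∧ x₁ ∈ U₁ ∧ x₂ ∈ U₂ ∧
      U₁ ×ˢ U₁ ∪ U₂ ×ˢ U₂ ⊆ D ∧ U₁ ×ˢ U₂ ∪ U₂ ×ˢ U₁ ⊆ F := by
  rw [nhds_prod_eq] at hD₁ hD₂ hF₁₂ hF₂₁
  obtain ⟨d₁, hd₁, hd₁D⟩ := mem_prod_self_iff.1 hD₁
  obtain ⟨d₂, hd₂, hd₂D⟩ := mem_prod_self_iff.1 hD₂
  obtain ⟨a₁, ha₁, a₂, ha₂, haF⟩ := mem_prod_iff.1 hF₁₂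
  obtain ⟨b₂, hb₂, b₁, hb₁, hbF⟩ := mem_prod_iff.1 hF₂₁
  refine ⟨interior (d₁ ∩ a₁ ∩ b₁), interior (d₂ ∩ a₂ ∩ b₂), isOpen_interior, isOpen_interior,
    mem_interior_iff_mem_nhds.2 (inter_mem (inter_mem hd₁ ha₁) hb₁),
    mem_interior_iff_mem_nhds.2 (inter_mem (inter_mem hd₂ ha₂) hb₂), ?_, ?_⟩
  · rintro p (⟨h₁, h₂⟩ | ⟨h₁, h₂⟩)
    · exact hd₁D ⟨(interior_subset h₁).1.1, (interior_subset h₂).1.1⟩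
    · exact hd₂D ⟨(interior_subset h₁).1.1, (interior_subset h₂).1.1⟩
  · rintro p (⟨h₁, h₂⟩ | ⟨h₁, h₂⟩)
    · exact haF ⟨(interior_subset h₁).1.2, (interior_subset h₂).1.2⟩
    · exact hbF ⟨(interior_subset h₁).2, (interior_subset h₂).2⟩

lemma otCost_lt_lintegral_prod {X : Type*} [MeasurableSpace X] {c : X → X → ℝ≥0∞}
    {μ ν : Measure X} [IsProbabilityMeasure μ] [IsProbabilityMeasure ν] {U₁ U₂ : Set X}
    (hU₁ : MeasurableSet U₁) (hU₂ : MeasurableSet U₂) (hμ₁ : μ U₁ ≠ 0) (hμ₂ : μ U₂ ≠ 0)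
    (hν₁ : ν U₁ ≠ 0) (hν₂ : ν U₂ ≠ 0) {r₁ r₂ : ℝ≥0∞} (hr : r₁ < r₂)
    (hdiag : ∀ p ∈ U₁ ×ˢ U₁ ∪ U₂ ×ˢ U₂, c p.1 p.2 ≤ r₁)
    (hcross : ∀ p ∈ U₁ ×ˢ U₂ ∪ U₂ ×ˢ U₁, r₂ ≤ c p.1 p.2)
    (hfin : ∫⁻ p, c p.1 p.2 ∂μ.prod ν ≠ ∞) :
    otCost c μ ν < ∫⁻ p, c p.1 p.2 ∂μ.prod ν := by
  have := cond_isProbabilityMeasure hμ₁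
  have := cond_isProbabilityMeasure hμ₂
  have := cond_isProbabilityMeasure hν₁
  have := cond_isProbabilityMeasure hν₂
  refine otCost_lt_of_le_smul_of_map_eq (P := μ.prod ν)
    (B := (μ[|U₁]).prod (ν[|U₂]) + (μ[|U₂]).prod (ν[|U₁]))
    (G := (μ[|U₁]).prod (ν[|U₁]) + (μ[|U₂]).prod (ν[|U₂]))
    (k := (μ U₁)⁻¹ * (ν U₂)⁻¹ + (μ U₂)⁻¹ * (ν U₁)⁻¹) (by simp) (by simp) ?_ ?_
    (map_fst_add_prod_swap ..).symm (map_snd_add_prod_swap ..).symm ?_ hfin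
  · simp [ENNReal.mul_eq_top, hμ₁, hμ₂, hν₁, hν₂]
  · rw [add_smul]
    exact add_le_add (prod_cond_le_smul_prod μ ν U₁ U₂) (prod_cond_le_smul_prod μ ν U₂ U₁)
  · simp only [lintegral_add_measure]
    calc _ ≤ r₁ + r₁ := add_le_add
          (lintegral_prod_cond_le hU₁ hU₁ hμ₁ hν₁ fun p hp => hdiag p (.inl hp))
          (lintegral_prod_cond_le hU₂ hU₂ hμ₂ hν₂ fun p hp => hdiag p (.inr hp))
      _ < r₂ + r₂ := ENNReal.add_lt_add hr hr
      _ ≤ _ := add_le_add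
          (le_lintegral_prod_cond hU₁ hU₂ hμ₁ hν₂ fun p hp => hcross p (.inl hp))
          (le_lintegral_prod_cond hU₂ hU₁ hμ₂ hν₁ fun p hp => hcross p (.inr hp))

lemma otCost_lt_lintegral_prod_of_mem_support {X : Type*} [TopologicalSpace X]
    [MeasurableSpace X] [OpensMeasurableSpace X] {c : X → X → ℝ≥0∞}
    (hc : Continuous (Function.uncurry c)) {μ ν : Measure X} [IsProbabilityMeasure μ]
    [IsProbabilityMeasure ν] {x₁ x₂ : X} (hμ₁ : x₁ ∈ μ.support) (hμ₂ : x₂ ∈ μ.support)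
    (hν₁ : x₁ ∈ ν.support) (hν₂ : x₂ ∈ ν.support)
    (hgap : max (c x₁ x₁) (c x₂ x₂) < min (c x₁ x₂) (c x₂ x₁))
    (hfin : ∫⁻ p, c p.1 p.2 ∂μ.prod ν ≠ ∞) :
    otCost c μ ν < ∫⁻ p, c p.1 p.2 ∂μ.prod ν := by
  obtain ⟨r₂, hr₂, hr₂c⟩ := exists_between hgap
  obtain ⟨r₁, hr₁, hr⟩ := exists_between hr₂
  have hD : IsOpen {p | Function.uncurry c p < r₁} := isOpen_lt hc continuous_const
  have hF : IsOpen {p | r₂ < Function.uncurry c p} := isOpen_lt continuous_const hc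
  obtain ⟨U₁, U₂, hU₁, hU₂, hxU₁, hxU₂, hdiag, hcross⟩ :=
    exists_isOpen_prod_subset_of_mem_nhds (hD.mem_nhds ((le_max_left _ _).trans_lt hr₁))
      (hD.mem_nhds ((le_max_right _ _).trans_lt hr₁))
      (hF.mem_nhds (hr₂c.trans_le (min_le_left _ _)))
      (hF.mem_nhds (hr₂c.trans_le (min_le_right _ _)))
  have hpos {m : Measure X} {x : X} {U : Set X} (hx : x ∈ m.support) (hU : IsOpen U)
      (hxU : x ∈ U) : m U ≠ 0 :=
    ((Measure.mem_support_iff_forall x).1 hx U (hU.mem_nhds hxU)).ne'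
  exact otCost_lt_lintegral_prod hU₁.measurableSet hU₂.measurableSet (hpos hμ₁ hU₁ hxU₁)
    (hpos hμ₂ hU₂ hxU₂) (hpos hν₁ hU₁ hxU₁) (hpos hν₂ hU₂ hxU₂) hr
    (fun p hp => (hdiag hp).le) (fun p hp => (hcross hp).le) hfin

section Dirac

variable {X : Type*} [MeasurableSpace X] [MeasurableSingletonClass X] {c : X → X → ℝ≥0∞}
  {x : X}

lemma lintegral_eq_of_map_fst_eq_dirac {π : Measure (X × X)}
    (hπ : π.map Prod.fst = Measure.dirac x) (hcx : Measurable (c x)) :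
    ∫⁻ p, c p.1 p.2 ∂π = ∫⁻ y, c x y ∂(π.map Prod.snd) := by
  have hfst : ∀ᵐ p ∂π, p.1 = x := by
    refine (ae_map_iff measurable_fst.aemeasurable (measurableSet_singleton x)).1 ?_
    rw [hπ]
    exact (ae_dirac_iff (measurableSet_singleton x)).2 rfl
  rw [lintegral_map hcx measurable_snd]
  exact lintegral_congr_ae (hfst.mono fun p hp => by simp only [hp])

lemma otCost_dirac_left (hcx : Measurable (c x)) (ν : Measure X) [IsProbabilityMeasure ν] :
    otCost c (Measure.dirac x) ν = ∫⁻ y, c x y ∂ν := by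
  have hcost {π : Measure (X × X)} (h₁ : π.map Prod.fst = Measure.dirac x)
      (h₂ : π.map Prod.snd = ν) : ∫⁻ p, c p.1 p.2 ∂π = ∫⁻ y, c x y ∂ν := by
    rw [lintegral_eq_of_map_fst_eq_dirac h₁ hcx, h₂]
  have h₁ : ((Measure.dirac x).prod ν).map Prod.fst = Measure.dirac x := by simp
  have h₂ : ((Measure.dirac x).prod ν).map Prod.snd = ν := by simp
  exact le_antisymm ((otCost_le_lintegral h₁ h₂).trans_eq (hcost h₁ h₂))
    (le_iInf₂ fun π hπ => (hcost hπ.1 hπ.2).ge)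

end Dirac

theorem otCost_eq_prod_integral_iff_dirac_general
    {X : Type*} [TopologicalSpace X] [PolishSpace X] [MeasurableSpace X] [BorelSpace X]
    (c : X → X → ℝ≥0∞)
    (hc_cont : Continuous (Function.uncurry c))
    (hc_diag : ∀ x, c x x = 0)
    (hc_pos : ∀ x₁ x₂, x₁ ≠ x₂ → 0 < c x₁ x₂)
    (μ ν : Measure X) [IsProbabilityMeasure μ] [IsProbabilityMeasure ν]
    (hsupp : msupport μ ⊆ msupport ν)
    (hfin : otCost c μ ν ≠ ∞) :
    otCost c μ ν = ∫⁻ x₁, ∫⁻ x₂, c x₁ x₂ ∂ν ∂μ ↔ ∃ x : X, μ = Measure.dirac x := by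
  refine ⟨fun heq => ?_, ?_⟩
  · by_contra hdirac
    obtain ⟨x₁, hx₁, x₂, hx₂, hne⟩ : ∃ x₁ ∈ μ.support, ∃ x₂ ∈ μ.support, x₁ ≠ x₂ := by
      simpa [Set.Subsingleton] using mt (exists_eq_dirac_of_subsingleton_support μ) hdirac
    rw [msupport_eq_support, msupport_eq_support] at hsupp
    have hgap : max (c x₁ x₁) (c x₂ x₂) < min (c x₁ x₂) (c x₂ x₁) := by
      simpa [hc_diag] using ⟨hc_pos _ _ hne, hc_pos _ _ hne.symm⟩
    have hprod : ∫⁻ p, c p.1 p.2 ∂μ.prod ν = ∫⁻ x₁, ∫⁻ x₂, c x₁ x₂ ∂ν ∂μ :=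
      lintegral_prod _ hc_cont.measurable.aemeasurable
    have hlt := otCost_lt_lintegral_prod_of_mem_support hc_cont hx₁ hx₂ (hsupp hx₁)
      (hsupp hx₂) hgap (by rwa [hprod, ← heq])
    rw [hprod, ← heq] at hlt
    exact lt_irrefl _ hlt
  · rintro ⟨x, rfl⟩
    rw [otCost_dirac_left (hc_cont.uncurry_left x).measurable, lintegral_dirac]

/-- For a positive continuous cost `c` on a Polish space `X` and
probability measures `μ`, `ν` with `supp μ ⊆ supp ν` and `T_c(μ, ν) < ∞`, the
independent coupling `μ ⊗ ν` is optimal, i.e. `T_c(μ, ν) = ∫∫ c dμ dν`, if and only if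
`μ` is a Dirac measure. -/
theorem otCost_eq_prod_integral_iff_dirac
    {X : Type*} [TopologicalSpace X] [PolishSpace X] [MeasurableSpace X] [BorelSpace X]
    (c : X → X → ℝ≥0∞)
    (hc_cont : Continuous (Function.uncurry c))
    (hc_symm : ∀ x₁ x₂, c x₁ x₂ = c x₂ x₁)
    (hc_diag : ∀ x, c x x = 0)
    (hc_pos : ∀ x₁ x₂, x₁ ≠ x₂ → 0 < c x₁ x₂)
    (μ ν : Measure X) [IsProbabilityMeasure μ] [IsProbabilityMeasure ν]
    (hsupp : msupport μ ⊆ msupport ν)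
    (hfin : otCost c μ ν ≠ ∞) :
    otCost c μ ν = ∫⁻ x₁, ∫⁻ x₂, c x₁ x₂ ∂ν ∂μ ↔ ∃ x : X, μ = Measure.dirac x :=
  otCost_eq_prod_integral_iff_dirac_general c hc_cont hc_diag hc_pos μ ν hsupp hfin
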